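/- Let X_k be a discrete random variable, A an ancestral set for X_k in a Bayesian network G for P, and suppose A' is another set with pa_2 := pa(k) \ A nonempty and A' = A \ pa(k). If X_k ⊥ pa_2 | (A', pa_1) where pa_1 = pa(k) ∩ A, and X_k ⊥ A' | pa(k) (the local Markov property), and all conditional probabilities P(pa_2, A' | pa_1) lie strictly between 0 and 1, then P(X_k | pa_1) = P(X_k | pa_1, pa_2). -/
import Mathlib


open scoped Classical BigOperators
open Finset

noncomputable section

/-- Probability of an event under a mass function on a finite sample space. -/
def prE {Ω : Type*} [Fintype Ω] (p : Ω → ℝ) (s : Set Ω) : ℝ :=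
  ∑ ω, if ω ∈ s then p ω else 0

/-- Conditional probability P(s | t). -/
def condPr {Ω : Type*} [Fintype Ω] (p : Ω → ℝ) (s t : Set Ω) : ℝ :=
  prE p (s ∩ t) / prE p t

/-- Independence of two random variables. -/
def IndepRV {Ω α β : Type*} [Fintype Ω] (p : Ω → ℝ) (X : Ω → α) (Y : Ω → β) : Prop :=
  ∀ a b, prE p {ω | X ω = a ∧ Y ω = b} = prE p {ω | X ω = a} * prE p {ω | Y ω = b}

/-- Conditional independence of X and Y given Z (cross-multiplied form). -/
def CondIndepRV {Ω α β γ : Type*} [Fintype Ω] (p : Ω → ℝ)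
    (X : Ω → α) (Y : Ω → β) (Z : Ω → γ) : Prop :=
  ∀ a b c,
    prE p {ω | X ω = a ∧ Y ω = b ∧ Z ω = c} * prE p {ω | Z ω = c} =
      prE p {ω | X ω = a ∧ Z ω = c} * prE p {ω | Y ω = b ∧ Z ω = c}

section Aux

variable {Ω : Type*} [Fintype Ω]

lemma prE_congr (p : Ω → ℝ) {s t : Set Ω} (h : ∀ ω, ω ∈ s ↔ ω ∈ t) :
    prE p s = prE p t := by
  unfold prE
  exact Finset.sum_congr rfl fun ω _ => by simp [h ω]

lemma prE_nonneg (p : Ω → ℝ) (hp : ∀ ω, 0 ≤ p ω) (s : Set Ω) : 0 ≤ prE p s := by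
  refine Finset.sum_nonneg fun ω _ => ?_
  split_ifs
  · exact hp ω
  · exact le_rfl

lemma prE_mono (p : Ω → ℝ) (hp : ∀ ω, 0 ≤ p ω) {s t : Set Ω} (h : s ⊆ t) :
    prE p s ≤ prE p t := by
  refine Finset.sum_le_sum fun ω _ => ?_
  by_cases hω : ω ∈ s
  · rw [if_pos hω, if_pos (h hω)]
  · rw [if_neg hω]
    split_ifs with h'
    · exact hp ω
    · exact le_rfl

lemma prE_fiber {γ : Type*} (p : Ω → ℝ) (Q : Ω → Prop) (f : Ω → γ) :
    prE p {ω | Q ω} =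
      ∑ c ∈ Finset.image f Finset.univ, prE p {ω | Q ω ∧ f ω = c} := by
  classical
  unfold prE
  rw [Finset.sum_comm]
  refine Finset.sum_congr rfl fun ω _ => ?_
  rw [Finset.sum_eq_single_of_mem (f ω) (Finset.mem_image_of_mem f (Finset.mem_univ ω))]
  · simp
  · intro c _ hc
    simp only [Set.mem_setOf_eq]
    rw [if_neg]
    rintro ⟨_, rfl⟩
    exact hc rfl

end Aux

/-- Let X_k, pa₁ = pa(k) ∩ A, pa₂ = pa(k) \ A ≠ ∅ and A' = A \ pa(k)
(abstracted here as random variables). If X_k ⊥ pa₂ | (A', pa₁), X_k ⊥ A' | (pa₁, pa₂)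
(local Markov property), and all conditional probabilities P(pa₂, A' | pa₁) lie
strictly between 0 and 1, then P(X_k | pa₁) = P(X_k | pa₁, pa₂). -/
theorem parents_conditional_collapse
    {Ω α γ₁ γ₂ γ₃ : Type*} [Fintype Ω]
    (p : Ω → ℝ) (hpos : ∀ ω, 0 < p ω) (hsum : ∑ ω, p ω = 1)
    (Xk : Ω → α) (Pa1 : Ω → γ₁) (Pa2 : Ω → γ₂) (A' : Ω → γ₃)
    (hCI1 : CondIndepRV p Xk Pa2 (fun ω => (A' ω, Pa1 ω)))
    (hCI2 : CondIndepRV p Xk A' (fun ω => (Pa1 ω, Pa2 ω)))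
    (hbetween : ∀ (y₁ : γ₁) (y₂ : γ₂) (a' : γ₃),
      0 < condPr p {ω | Pa2 ω = y₂ ∧ A' ω = a'} {ω | Pa1 ω = y₁} ∧
        condPr p {ω | Pa2 ω = y₂ ∧ A' ω = a'} {ω | Pa1 ω = y₁} < 1) :
    ∀ (xk : α) (y₁ : γ₁) (y₂ : γ₂),
      condPr p {ω | Xk ω = xk} {ω | Pa1 ω = y₁} =
        condPr p {ω | Xk ω = xk} {ω | Pa1 ω = y₁ ∧ Pa2 ω = y₂} := by
  classical
  intro xk y₁ y₂
  have hp0 : ∀ ω, 0 ≤ p ω := fun ω => (hpos ω).le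
  have hΩ : Nonempty Ω := by
    rcases isEmpty_or_nonempty Ω with h | h
    · exact absurd hsum (by simp)
    · exact h
  obtain ⟨ω₀⟩ := hΩ
  set a₀ := A' ω₀ with ha₀
  -- abbreviations
  set V : γ₂ → ℝ := fun c => prE p {ω | Xk ω = xk ∧ Pa1 ω = y₁ ∧ Pa2 ω = c} with hV
  set W : γ₂ → ℝ := fun c => prE p {ω | Pa1 ω = y₁ ∧ Pa2 ω = c} with hW
  set U : ℝ := prE p {ω | Xk ω = xk ∧ A' ω = a₀ ∧ Pa1 ω = y₁} with hU
  set R : ℝ := prE p {ω | A' ω = a₀ ∧ Pa1 ω = y₁} with hR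
  set T : γ₂ → ℝ := fun c => prE p {ω | Xk ω = xk ∧ Pa2 ω = c ∧ A' ω = a₀ ∧ Pa1 ω = y₁}
    with hT
  set Qv : γ₂ → ℝ := fun c => prE p {ω | Pa2 ω = c ∧ A' ω = a₀ ∧ Pa1 ω = y₁} with hQv
  -- positivity of the denominator P(Pa1 = y₁)
  have hb := (hbetween y₁ y₂ a₀).1
  have hden0 : prE p {ω | Pa1 ω = y₁} ≠ 0 := by
    intro h
    rw [condPr, h, div_zero] at hb
    exact lt_irrefl 0 hb
  have hdenpos : 0 < prE p {ω | Pa1 ω = y₁} :=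
    lt_of_le_of_ne (prE_nonneg p hp0 _) (Ne.symm hden0)
  -- positivity of Qv c for every c
  have hQpos : ∀ c, 0 < Qv c := by
    intro c
    have hb' := (hbetween y₁ c a₀).1
    have hnum : 0 <
        prE p ({ω | Pa2 ω = c ∧ A' ω = a₀} ∩ {ω | Pa1 ω = y₁}) := by
      have h2 := mul_pos hb' hdenpos
      rwa [condPr, div_mul_cancel₀ _ hden0] at h2
    have heq : prE p ({ω | Pa2 ω = c ∧ A' ω = a₀} ∩ {ω | Pa1 ω = y₁}) = Qv c := by
      refine prE_congr p fun ω => ?_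
      simp only [Set.mem_inter_iff, Set.mem_setOf_eq]
      tauto
    rwa [heq] at hnum
  have hWpos : ∀ c, 0 < W c := by
    intro c
    refine lt_of_lt_of_le (hQpos c) (prE_mono p hp0 ?_)
    intro ω hω
    simp only [Set.mem_setOf_eq] at hω ⊢
    tauto
  have hRpos : 0 < R := by
    refine lt_of_lt_of_le (hQpos y₂) (prE_mono p hp0 ?_)
    intro ω hω
    simp only [Set.mem_setOf_eq] at hω ⊢
    tauto
  -- key identity : V c * R = U * W c for every c
  have key : ∀ c, V c * R = U * W c := by
    intro c
    have e1 := hCI1 xk c (a₀, y₁)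
    simp only [Prod.mk.injEq] at e1
    -- e1 : T c * R = U * Qv c (up to set reorderings)
    have e2 := hCI2 xk a₀ (y₁, c)
    simp only [Prod.mk.injEq] at e2
    have hT2 : prE p {ω | Xk ω = xk ∧ A' ω = a₀ ∧ Pa1 ω = y₁ ∧ Pa2 ω = c} = T c := by
      refine prE_congr p fun ω => ?_
      simp only [Set.mem_setOf_eq]; tauto
    have hQ2 : prE p {ω | A' ω = a₀ ∧ Pa1 ω = y₁ ∧ Pa2 ω = c} = Qv c := by
      refine prE_congr p fun ω => ?_
      simp only [Set.mem_setOf_eq]; tauto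
    rw [hT2, hQ2] at e2
    -- now e2 : T c * W c = V c * Qv c
    have hq := (hQpos c).ne'
    have h3 : V c * R * Qv c = U * W c * Qv c := by
      calc V c * R * Qv c = (V c * Qv c) * R := by ring
        _ = (T c * W c) * R := by rw [← e2]
        _ = (T c * R) * W c := by ring
        _ = (U * Qv c) * W c := by rw [e1]
        _ = U * W c * Qv c := by ring
    exact mul_right_cancel₀ hq h3
  -- fiber decompositions
  have hdV : prE p {ω | Xk ω = xk ∧ Pa1 ω = y₁} =
      ∑ c ∈ Finset.image Pa2 Finset.univ, V c := by
    rw [prE_fiber p (fun ω => Xk ω = xk ∧ Pa1 ω = y₁) Pa2]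
    refine Finset.sum_congr rfl fun c _ => ?_
    refine prE_congr p fun ω => ?_
    simp only [Set.mem_setOf_eq]; tauto
  have hdW : prE p {ω | Pa1 ω = y₁} =
      ∑ c ∈ Finset.image Pa2 Finset.univ, W c := by
    rw [prE_fiber p (fun ω => Pa1 ω = y₁) Pa2]
  -- summed identity
  have hsumkey : prE p {ω | Xk ω = xk ∧ Pa1 ω = y₁} * R =
      U * prE p {ω | Pa1 ω = y₁} := by
    rw [hdV, hdW, Finset.sum_mul, Finset.mul_sum]
    exact Finset.sum_congr rfl fun c _ => key c
  -- rewrite the goal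
  have hi1 : prE p ({ω | Xk ω = xk} ∩ {ω | Pa1 ω = y₁}) =
      prE p {ω | Xk ω = xk ∧ Pa1 ω = y₁} := by
    refine prE_congr p fun ω => ?_
    simp only [Set.mem_inter_iff, Set.mem_setOf_eq]
  have hi2 : prE p ({ω | Xk ω = xk} ∩ {ω | Pa1 ω = y₁ ∧ Pa2 ω = y₂}) = V y₂ := by
    refine prE_congr p fun ω => ?_
    simp only [Set.mem_inter_iff, Set.mem_setOf_eq]
  rw [condPr, condPr, hi1, hi2]
  rw [div_eq_div_iff hdenpos.ne' (hWpos y₂).ne']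
  -- goal : prE {Xk∧Pa1} * W y₂ = V y₂ * prE {Pa1}
  have hcancel : prE p {ω | Xk ω = xk ∧ Pa1 ω = y₁} * W y₂ * R =
      V y₂ * prE p {ω | Pa1 ω = y₁} * R := by
    calc prE p {ω | Xk ω = xk ∧ Pa1 ω = y₁} * W y₂ * R
        = (prE p {ω | Xk ω = xk ∧ Pa1 ω = y₁} * R) * W y₂ := by ring
      _ = (U * prE p {ω | Pa1 ω = y₁}) * W y₂ := by rw [hsumkey]
      _ = (U * W y₂) * prE p {ω | Pa1 ω = y₁} := by ring
      _ = (V y₂ * R) * prE p {ω | Pa1 ω = y₁} := by rw [← key y₂]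
      _ = V y₂ * prE p {ω | Pa1 ω = y₁} * R := by ring
  exact mul_right_cancel₀ hRpos.ne' hcancel

end
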